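/- Let (M,d,f) be a compact dynamical system and g : [0,ρ] → [0,∞) continuous, increasing, subadditive with g⁻¹({0}) = {0}, ρ ≥ diam(M). Set g_d = g ∘ d and k_m(g) = liminf_{ε→0⁺} log g(ε)/log ε. If k_m(g) > 0, then the lower metric mean dimensions satisfy mdim_M-lower(M, d, f) ≥ k_m(g) · mdim_M-lower(M, g_d, f). -/
import Mathlib


open Filter

/-- `E` is `(n,f,ε)`-spanning with respect to the (pseudo)metric `ρ`. -/
def IsSpanningSet {M : Type*} (ρ : M → M → ℝ) (f : M → M) (n : ℕ) (ε : ℝ)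
    (E : Set M) : Prop :=
  ∀ x : M, ∃ y ∈ E, ∀ j < n, ρ (f^[j] x) (f^[j] y) < ε

/-- Minimal cardinality of an `(n,f,ε)`-spanning set. -/
noncomputable def spanCount {M : Type*} (ρ : M → M → ℝ) (f : M → M) (n : ℕ)
    (ε : ℝ) : ℕ :=
  sInf {m : ℕ | ∃ E : Finset M, E.card = m ∧ IsSpanningSet ρ f n ε ↑E}

/-- Lower metric mean dimension
`liminf_{ε→0⁺} [limsup_n (1/n) log span_ρ(n,f,ε)] / |log ε|`. -/
noncomputable def mdimMlower {M : Type*} (ρ : M → M → ℝ) (f : M → M) : ℝ :=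
  liminf (fun ε : ℝ =>
      (limsup (fun n : ℕ => Real.log (spanCount ρ f n ε) / n) atTop) / |Real.log ε|)
    (nhdsWithin 0 (Set.Ioi 0))

/-- `k_m(g) = liminf_{ε→0⁺} log g(ε) / log ε`. -/
noncomputable def km (g : ℝ → ℝ) : ℝ :=
  liminf (fun ε => Real.log (g ε) / Real.log ε) (nhdsWithin 0 (Set.Ioi 0))

set_option linter.unusedSectionVars false
set_option linter.unusedVariables false

open Set Topology

private lemma exists_spanning_pow {M : Type*} [MetricSpace M] [CompactSpace M] [Nonempty M]
    (f : M → M) {ε : ℝ} (hε : 0 < ε) :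
    ∃ N : ℕ, 0 < N ∧ ∀ n : ℕ, ∃ E : Finset M,
      E.card ≤ N ^ n ∧ IsSpanningSet dist f n ε ↑E := by
  classical
  obtain ⟨s, hsfin, hscov⟩ := Metric.totallyBounded_iff.mp
    ((isCompact_univ : IsCompact (univ : Set M)).totallyBounded) (ε/2) (by linarith)
  have hc : ∀ x : M, ∃ a, a ∈ s ∧ dist x a < ε/2 := by
    intro x
    have := hscov (mem_univ x)
    simpa using this
  choose c hcs hcd using hc
  refine ⟨hsfin.toFinset.card, ?_, ?_⟩
  · exact Finset.card_pos.mpr ⟨c (Classical.arbitrary M), by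
      simp [hcs]⟩
  intro n
  set Φ : M → (Fin n → M) := fun x j => c (f^[(j : ℕ)] x) with hΦ
  set ψ : (Fin n → M) → M := fun φ =>
    if h : ∃ x, Φ x = φ then h.choose else Classical.arbitrary M with hψ
  refine ⟨(Fintype.piFinset fun _ : Fin n => hsfin.toFinset).image ψ, ?_, ?_⟩
  · calc ((Fintype.piFinset fun _ : Fin n => hsfin.toFinset).image ψ).card
        ≤ (Fintype.piFinset fun _ : Fin n => hsfin.toFinset).card := Finset.card_image_le
      _ = hsfin.toFinset.card ^ n := by
          rw [Fintype.card_piFinset]; simp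
  · intro x
    have hmem : Φ x ∈ Fintype.piFinset fun _ : Fin n => hsfin.toFinset := by
      rw [Fintype.mem_piFinset]
      intro j
      simp [hΦ, hcs]
    have hex : ∃ z, Φ z = Φ x := ⟨x, rfl⟩
    refine ⟨ψ (Φ x), by
      simpa using Finset.mem_image_of_mem ψ hmem, ?_⟩
    have hspec : Φ (ψ (Φ x)) = Φ x := by
      rw [hψ]; simp only [dif_pos hex]; exact hex.choose_spec
    intro j hj
    have h1 : dist (f^[j] x) (c (f^[j] x)) < ε/2 := hcd _
    have h2 : dist (f^[j] (ψ (Φ x))) (c (f^[j] (ψ (Φ x)))) < ε/2 := hcd _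
    have heq : c (f^[j] (ψ (Φ x))) = c (f^[j] x) := by
      have := congrFun hspec ⟨j, hj⟩
      simpa [hΦ] using this
    calc dist (f^[j] x) (f^[j] (ψ (Φ x)))
        ≤ dist (f^[j] x) (c (f^[j] x)) + dist (c (f^[j] x)) (f^[j] (ψ (Φ x))) :=
          dist_triangle _ _ _
      _ < ε/2 + ε/2 := by
          have h2' : dist (c (f^[j] x)) (f^[j] (ψ (Φ x))) < ε/2 := by
            rw [← heq, dist_comm]; exact h2
          exact add_lt_add h1 h2'
      _ = ε := by ring

private lemma spanCount_le_card {M : Type*} {ρ' : M → M → ℝ} {f : M → M} {n : ℕ} {ε : ℝ}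
    {E : Finset M} (h : IsSpanningSet ρ' f n ε ↑E) : spanCount ρ' f n ε ≤ E.card :=
  Nat.sInf_le ⟨E, rfl, h⟩

private lemma one_le_spanCount {M : Type*} [Nonempty M] {ρ' : M → M → ℝ} {f : M → M} {n : ℕ}
    {ε : ℝ} (h : ∃ E : Finset M, IsSpanningSet ρ' f n ε ↑E) : 1 ≤ spanCount ρ' f n ε := by
  obtain ⟨E, hE⟩ := h
  have hne : {m : ℕ | ∃ E : Finset M, E.card = m ∧ IsSpanningSet ρ' f n ε ↑E}.Nonempty :=
    ⟨E.card, E, rfl, hE⟩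
  obtain ⟨E', hcard, hsp⟩ := Nat.sInf_mem hne
  obtain ⟨y, hy, -⟩ := hsp (Classical.arbitrary M)
  have : 0 < E'.card := Finset.card_pos.mpr ⟨y, hy⟩
  rw [spanCount, ← hcard]
  exact this

private lemma log_div_nonneg {u : ℕ → ℕ} (hu : ∀ n, 1 ≤ u n) (n : ℕ) :
    0 ≤ Real.log (u n) / n :=
  div_nonneg (Real.log_nonneg (by exact_mod_cast hu n)) (Nat.cast_nonneg n)

private lemma limsup_log_div_nonneg {u : ℕ → ℕ} (hu : ∀ n, 1 ≤ u n) :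
    0 ≤ limsup (fun n : ℕ => Real.log (u n) / n) atTop := by
  rw [limsup_eq]
  apply Real.sInf_nonneg
  intro a ha
  obtain ⟨n, hn⟩ := ha.exists
  exact le_trans (log_div_nonneg hu n) hn

private lemma log_div_le_log {u : ℕ → ℕ} {N : ℕ} (hN : 1 ≤ N) (hu1 : ∀ n, 1 ≤ u n)
    (hu : ∀ n, u n ≤ N ^ n) (n : ℕ) : Real.log (u n) / n ≤ Real.log N := by
  rcases Nat.eq_zero_or_pos n with h | h
  · subst h
    simp [Real.log_nonneg (by exact_mod_cast hN : (1:ℝ) ≤ (N:ℝ))]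
  · have h1 : Real.log (u n) ≤ Real.log ((N : ℝ) ^ n) := by
      apply Real.log_le_log (by exact_mod_cast hu1 n)
      exact_mod_cast hu n
    rw [Real.log_pow] at h1
    rw [div_le_iff₀ (by exact_mod_cast h : (0:ℝ) < n)]
    calc Real.log (u n) ≤ n * Real.log N := h1
      _ = Real.log N * n := by ring

private lemma limsup_log_div_le {u : ℕ → ℕ} {N : ℕ} (hN : 1 ≤ N) (hu1 : ∀ n, 1 ≤ u n)
    (hu : ∀ n, u n ≤ N ^ n) :
    limsup (fun n : ℕ => Real.log (u n) / n) atTop ≤ Real.log N := by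
  apply limsup_le_of_le
  · exact isCoboundedUnder_le_of_le atTop (log_div_nonneg hu1)
  · exact Eventually.of_forall (log_div_le_log hN hu1 hu)

private lemma limsup_log_div_mono {u v : ℕ → ℕ} (h : ∀ n, u n ≤ v n) (hu1 : ∀ n, 1 ≤ u n)
    {N : ℕ} (hN : 1 ≤ N) (hv : ∀ n, v n ≤ N ^ n) :
    limsup (fun n : ℕ => Real.log (u n) / n) atTop
      ≤ limsup (fun n : ℕ => Real.log (v n) / n) atTop := by
  have hv1 : ∀ n, 1 ≤ v n := fun n => (hu1 n).trans (h n)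
  apply limsup_le_limsup
  · apply Eventually.of_forall
    intro n
    apply div_le_div_of_nonneg_right ?_ (Nat.cast_nonneg n)
    exact Real.log_le_log (by exact_mod_cast hu1 n) (by exact_mod_cast h n)
  · exact isCoboundedUnder_le_of_le atTop (log_div_nonneg hu1)
  · exact ⟨Real.log N, eventually_map.2 (Eventually.of_forall (log_div_le_log hN hv1 hv))⟩

section transfer

variable {M : Type*} [MetricSpace M] [CompactSpace M]
variable {f : M → M} {ρ : ℝ} {g : ℝ → ℝ}

private lemma span_transfer (hdiam : ∀ x y : M, dist x y ≤ ρ)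
    (hmono : MonotoneOn g (Set.Icc 0 ρ)) {n : ℕ} {ε ε' : ℝ} {E : Finset M}
    (hε : 0 < ε) (hερ : ε ≤ ρ) (hlt : g ε < ε')
    (h : IsSpanningSet (fun x y : M => dist x y) f n ε ↑E) :
    IsSpanningSet (fun x y : M => g (dist x y)) f n ε' ↑E := by
  intro x
  obtain ⟨y, hy, hd⟩ := h x
  exact ⟨y, hy, fun j hj => lt_of_le_of_lt
    (hmono ⟨dist_nonneg, hdiam _ _⟩ ⟨hε.le, hερ⟩ (hd j hj).le) hlt⟩

private lemma span_transfer_rev (hdiam : ∀ x y : M, dist x y ≤ ρ)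
    (hmono : MonotoneOn g (Set.Icc 0 ρ)) {n : ℕ} {ε : ℝ} {E : Finset M}
    (hε : 0 < ε) (hερ : ε ≤ ρ)
    (h : IsSpanningSet (fun x y : M => g (dist x y)) f n (g ε) ↑E) :
    IsSpanningSet (fun x y : M => dist x y) f n ε ↑E := by
  intro x
  obtain ⟨y, hy, hd⟩ := h x
  refine ⟨y, hy, fun j hj => ?_⟩
  by_contra hcon
  push_neg at hcon
  exact absurd (hd j hj)
    (not_lt.mpr (hmono ⟨hε.le, hερ⟩ ⟨dist_nonneg, hdiam _ _⟩ hcon))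

variable [Nonempty M]

private lemma spanCount_gd_le (hdiam : ∀ x y : M, dist x y ≤ ρ)
    (hmono : MonotoneOn g (Set.Icc 0 ρ)) {ε ε' : ℝ}
    (hε : 0 < ε) (hερ : ε ≤ ρ) (hlt : g ε < ε') (n : ℕ) :
    spanCount (fun x y : M => g (dist x y)) f n ε' ≤ spanCount (fun x y : M => dist x y) f n ε := by
  obtain ⟨N, hN, hNs⟩ := exists_spanning_pow f hε
  obtain ⟨E0, _, hE0⟩ := hNs n
  have hne : {m : ℕ | ∃ E : Finset M, E.card = m ∧
      IsSpanningSet (fun x y : M => dist x y) f n ε ↑E}.Nonempty := ⟨E0.card, E0, rfl, hE0⟩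
  obtain ⟨E, hcard, hsp⟩ := Nat.sInf_mem hne
  calc spanCount (fun x y : M => g (dist x y)) f n ε'
      ≤ E.card := spanCount_le_card (span_transfer hdiam hmono hε hερ hlt hsp)
    _ = spanCount (fun x y : M => dist x y) f n ε := hcard

private lemma spanCount_dist_le (hdiam : ∀ x y : M, dist x y ≤ ρ)
    (hmono : MonotoneOn g (Set.Icc 0 ρ)) {ε : ℝ}
    (hε : 0 < ε) (hερ : ε ≤ ρ) (n : ℕ)
    (hex : ∃ E : Finset M, IsSpanningSet (fun x y : M => g (dist x y)) f n (g ε) ↑E) :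
    spanCount (fun x y : M => dist x y) f n ε
      ≤ spanCount (fun x y : M => g (dist x y)) f n (g ε) := by
  obtain ⟨E0, hE0⟩ := hex
  have hne : {m : ℕ | ∃ E : Finset M, E.card = m ∧
      IsSpanningSet (fun x y : M => g (dist x y)) f n (g ε) ↑E}.Nonempty := ⟨E0.card, E0, rfl, hE0⟩
  obtain ⟨E, hcard, hsp⟩ := Nat.sInf_mem hne
  calc spanCount (fun x y : M => dist x y) f n ε
      ≤ E.card := spanCount_le_card (span_transfer_rev hdiam hmono hε hερ hsp)
    _ = _ := hcard

private lemma S_gd_le_S_dist (hdiam : ∀ x y : M, dist x y ≤ ρ)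
    (hmono : MonotoneOn g (Set.Icc 0 ρ)) {ε ε' : ℝ}
    (hε : 0 < ε) (hερ : ε ≤ ρ) (hlt : g ε < ε') :
    limsup (fun n : ℕ => Real.log (spanCount (fun x y : M => g (dist x y)) f n ε') / n) atTop
      ≤ limsup (fun n : ℕ => Real.log (spanCount (fun x y : M => dist x y) f n ε) / n) atTop := by
  obtain ⟨N, hN, hNs⟩ := exists_spanning_pow f hε
  apply limsup_log_div_mono
  · exact spanCount_gd_le hdiam hmono hε hερ hlt
  · intro n
    obtain ⟨E, _, hE⟩ := hNs n
    exact one_le_spanCount ⟨E, span_transfer hdiam hmono hε hερ hlt hE⟩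
  · exact hN
  · intro n
    obtain ⟨E, hc, hE⟩ := hNs n
    exact (spanCount_le_card hE).trans hc

private lemma S_dist_le_S_gd (hdiam : ∀ x y : M, dist x y ≤ ρ)
    (hmono : MonotoneOn g (Set.Icc 0 ρ)) {ε εs : ℝ}
    (hε : 0 < ε) (hερ : ε ≤ ρ) (hεs : 0 < εs) (hεsρ : εs ≤ ρ) (hgs : g εs < g ε) :
    limsup (fun n : ℕ => Real.log (spanCount (fun x y : M => dist x y) f n ε) / n) atTop
      ≤ limsup (fun n : ℕ => Real.log (spanCount (fun x y : M => g (dist x y)) f n (g ε)) / n)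
          atTop := by
  obtain ⟨N, hN, hNs⟩ := exists_spanning_pow f hεs
  have hexg : ∀ n : ℕ, ∃ E : Finset M,
      IsSpanningSet (fun x y : M => g (dist x y)) f n (g ε) ↑E ∧ E.card ≤ N ^ n := by
    intro n
    obtain ⟨E, hc, hE⟩ := hNs n
    exact ⟨E, span_transfer hdiam hmono hεs hεsρ hgs hE, hc⟩
  apply limsup_log_div_mono
  · intro n; exact spanCount_dist_le hdiam hmono hε hερ n ⟨(hexg n).choose, (hexg n).choose_spec.1⟩
  · intro n
    obtain ⟨N', hN', hNs'⟩ := exists_spanning_pow f hε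
    obtain ⟨E, _, hE⟩ := hNs' n
    exact one_le_spanCount ⟨E, hE⟩
  · exact hN
  · intro n
    obtain ⟨E, hsp, hc⟩ := hexg n
    exact (spanCount_le_card hsp).trans hc

private lemma one_le_spanCount_dist {ε : ℝ} (hε : 0 < ε) (n : ℕ) :
    1 ≤ spanCount (fun x y : M => dist x y) f n ε := by
  obtain ⟨N, hN, hNs⟩ := exists_spanning_pow f hε
  obtain ⟨E, _, hE⟩ := hNs n
  exact one_le_spanCount ⟨E, hE⟩

end transfer

private lemma g_iter {ρ : ℝ} {g : ℝ → ℝ}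
    (hsub : ∀ x y, 0 ≤ x → 0 ≤ y → x + y ≤ ρ → g (x + y) ≤ g x + g y)
    (hg0 : g 0 = 0) :
    ∀ (k : ℕ) (x : ℝ), 0 ≤ x → (k : ℝ) * x ≤ ρ → g ((k : ℝ) * x) ≤ k * g x := by
  intro k
  induction k with
  | zero => intro x hx h; simp [hg0]
  | succ k ih =>
    intro x hx h
    have hkk : ((k : ℝ) + 1) * x = (k : ℝ) * x + x := by ring
    push_cast at h ⊢
    rw [hkk] at h ⊢
    have hkx : (0:ℝ) ≤ (k : ℝ) * x := by positivity
    have hk : (k : ℝ) * x ≤ ρ := by nlinarith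
    calc g ((k:ℝ)*x + x) ≤ g ((k:ℝ)*x) + g x := hsub _ _ hkx hx h
      _ ≤ (k : ℝ) * g x + g x := by linarith [ih x hx hk]
      _ = ((k : ℝ) + 1) * g x := by ring

private lemma g_linear {ρ : ℝ} {g : ℝ → ℝ} (hρ : 0 < ρ)
    (hmono : MonotoneOn g (Set.Icc 0 ρ))
    (hsub : ∀ x y, 0 ≤ x → 0 ≤ y → x + y ≤ ρ → g (x + y) ≤ g x + g y)
    (hnonneg : ∀ x ∈ Set.Icc (0:ℝ) ρ, 0 ≤ g x)
    (hg0 : g 0 = 0) :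
    ∀ x ∈ Set.Ioc (0:ℝ) ρ, g (ρ/2) / ρ * x ≤ g x := by
  rintro x ⟨hx, hxρ⟩
  have hm0 : 0 ≤ g (ρ/2) := hnonneg _ ⟨by linarith, by linarith⟩
  have hgx0 : 0 ≤ g x := hnonneg x ⟨hx.le, hxρ⟩
  by_cases hhalf : ρ/2 ≤ x
  · have h1 : g (ρ/2) ≤ g x := hmono ⟨by linarith, by linarith⟩ ⟨hx.le, hxρ⟩ hhalf
    rw [div_mul_eq_mul_div, div_le_iff₀ hρ]
    nlinarith
  · push_neg at hhalf
    set n : ℕ := ⌈(ρ/2)/x⌉₊ with hn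
    have hx2 : 0 < (ρ/2)/x := by positivity
    have hn1 : 1 ≤ n := Nat.one_le_ceil_iff.mpr hx2
    have hnx : ρ/2 ≤ (n : ℝ) * x := by
      have h := Nat.le_ceil ((ρ/2)/x)
      have := mul_le_mul_of_nonneg_right h hx.le
      rwa [div_mul_cancel₀ _ (ne_of_gt hx)] at this
    have hnxρ : (n : ℝ) * x ≤ ρ := by
      have h2 : (n : ℝ) < (ρ/2)/x + 1 := Nat.ceil_lt_add_one hx2.le
      have h3 : (n : ℝ) * x < ((ρ/2)/x + 1) * x := by
        exact mul_lt_mul_of_pos_right h2 hx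
      rw [add_mul, div_mul_cancel₀ _ (ne_of_gt hx), one_mul] at h3
      linarith
    have hgnx : g (ρ/2) ≤ g ((n:ℝ) * x) :=
      hmono ⟨by linarith, by linarith⟩ ⟨by positivity, hnxρ⟩ hnx
    have hkey : g (ρ/2) ≤ (n : ℝ) * g x := le_trans hgnx (g_iter hsub hg0 n x hx.le hnxρ)
    rw [div_mul_eq_mul_div, div_le_iff₀ hρ]
    have hn0 : (0:ℝ) < n := by exact_mod_cast hn1
    nlinarith [mul_le_mul_of_nonneg_right hkey hx.le, mul_le_mul_of_nonneg_right hnxρ hgx0]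

private noncomputable def Sfun {M : Type*} (ρ' : M → M → ℝ) (f : M → M) (ε : ℝ) : ℝ :=
  limsup (fun n : ℕ => Real.log (spanCount ρ' f n ε) / n) atTop

private noncomputable def Ffun {M : Type*} (ρ' : M → M → ℝ) (f : M → M) (ε : ℝ) : ℝ :=
  Sfun ρ' f ε / |Real.log ε|

private lemma mdim_eq_liminf {M : Type*} (ρ' : M → M → ℝ) (f : M → M) :
    mdimMlower ρ' f = liminf (Ffun ρ' f) (nhdsWithin 0 (Set.Ioi 0)) := rfl

set_option maxHeartbeats 2000000 in
/-- For a continuous, increasing, subadditive `g` vanishing exactly at `0` with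
`k_m(g) > 0`, the lower metric mean dimensions satisfy
`mdim_M-lower(M, d, f) ≥ k_m(g) · mdim_M-lower(M, g_d, f)`. -/
theorem mdimMlower_ge_km_mul {M : Type*} [MetricSpace M] [CompactSpace M]
    (f : M → M) (hf : Continuous f) (ρ : ℝ)
    (hdiam : ∀ x y : M, dist x y ≤ ρ) (g : ℝ → ℝ)
    (hcont : ContinuousOn g (Set.Icc 0 ρ))
    (hmono : MonotoneOn g (Set.Icc 0 ρ))
    (hsub : ∀ x y, 0 ≤ x → 0 ≤ y → x + y ≤ ρ → g (x + y) ≤ g x + g y)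
    (hnonneg : ∀ x ∈ Set.Icc (0:ℝ) ρ, 0 ≤ g x)
    (hzero : ∀ x ∈ Set.Icc (0:ℝ) ρ, g x = 0 ↔ x = 0)
    (hk : 0 < km g) :
    km g * mdimMlower (fun x y : M => g (dist x y)) f
      ≤ mdimMlower (fun x y : M => dist x y) f := by
  classical
  cases isEmpty_or_nonempty M with
  | inl hM =>
    have hsc : ∀ (ρ' : M → M → ℝ) (n : ℕ) (ε : ℝ), spanCount ρ' f n ε = 0 := by
      intro ρ' n ε
      exact Nat.sInf_eq_zero.mpr (Or.inl ⟨∅, by simp, fun x => (hM.false x).elim⟩)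
    have hmd : ∀ ρ' : M → M → ℝ, mdimMlower ρ' f = 0 := by
      intro ρ'
      unfold mdimMlower
      simp [hsc]
    rw [hmd, hmd, mul_zero]
  | inr hM =>
  have hρ0 : 0 ≤ ρ :=
    le_trans dist_nonneg (hdiam (Classical.arbitrary M) (Classical.arbitrary M))
  have hg00 : g 0 = 0 := (hzero 0 ⟨le_rfl, hρ0⟩).mpr rfl
  set l : Filter ℝ := nhdsWithin 0 (Set.Ioi 0) with hldef
  rcases eq_or_lt_of_le hρ0 with hρ | hρ
  · -- degenerate case ρ = 0
    have hdist0 : ∀ x y : M, dist x y = 0 := fun x y =>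
      le_antisymm (by rw [hρ]; exact hdiam x y) dist_nonneg
    have hspan1 : ∀ (ρ' : M → M → ℝ), (∀ x y : M, ρ' x y = 0) →
        ∀ (n : ℕ) (ε : ℝ), 0 < ε → spanCount ρ' f n ε = 1 := by
      intro ρ' hρ' n ε hε
      have hsp : IsSpanningSet ρ' f n ε ↑({Classical.arbitrary M} : Finset M) := by
        intro x
        exact ⟨Classical.arbitrary M, by simp, fun j hj => by rw [hρ']; exact hε⟩
      refine le_antisymm ?_ (one_le_spanCount ⟨_, hsp⟩)
      simpa using spanCount_le_card hsp
    have hmd : ∀ ρ' : M → M → ℝ, (∀ x y : M, ρ' x y = 0) → mdimMlower ρ' f = 0 := by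
      intro ρ' hρ'
      rw [mdim_eq_liminf, ← hldef]
      have hev : ∀ᶠ ε in l, Ffun ρ' f ε = 0 := by
        filter_upwards [self_mem_nhdsWithin] with ε hε
        have : (fun n : ℕ => Real.log (spanCount ρ' f n ε) / n) = fun _ : ℕ => 0 := by
          funext n
          rw [hspan1 ρ' hρ' n ε hε]
          simp
        rw [Ffun, Sfun, this, limsup_const, zero_div]
      rw [liminf_congr hev, liminf_const]
    rw [hmd _ hdist0, hmd _ (fun x y => by rw [hdist0, hg00]), mul_zero]
  · -- main case 0 < ρ
    rw [mdim_eq_liminf, mdim_eq_liminf, ← hldef]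
    have hkm : km g = liminf (fun ε => Real.log (g ε) / Real.log ε) l := rfl
    -- basic eventual facts
    have hIccmem : Set.Icc (0:ℝ) ρ ∈ l := by
      apply mem_of_superset (inter_mem self_mem_nhdsWithin
        (mem_nhdsWithin_of_mem_nhds (Iio_mem_nhds hρ)))
      rintro x ⟨hx1, hx2⟩
      exact ⟨le_of_lt hx1, le_of_lt hx2⟩
    have hevI : ∀ᶠ ε in l, 0 < ε ∧ ε < ρ ∧ ε < 1 := by
      filter_upwards [self_mem_nhdsWithin,
        mem_nhdsWithin_of_mem_nhds (Iio_mem_nhds (lt_min hρ one_pos))] with ε h1 h2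
      exact ⟨h1, lt_of_lt_of_le h2 (min_le_left _ _), lt_of_lt_of_le h2 (min_le_right _ _)⟩
    have htend0 : Tendsto g l (𝓝 0) := by
      have h1 : ContinuousWithinAt g (Set.Icc 0 ρ) 0 := hcont 0 ⟨le_rfl, hρ0⟩
      have h2 : l ≤ nhdsWithin 0 (Set.Icc 0 ρ) := nhdsWithin_le_iff.mpr hIccmem
      have := h1.tendsto.mono_left h2
      rwa [hg00] at this
    have hgpos : ∀ ε ∈ Set.Ioc (0:ℝ) ρ, 0 < g ε := by
      rintro ε ⟨h1, h2⟩
      rcases lt_or_eq_of_le (hnonneg ε ⟨h1.le, h2⟩) with h | h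
      · exact h
      · exact absurd ((hzero ε ⟨h1.le, h2⟩).mp h.symm) (ne_of_gt h1)
    have hevg : ∀ᶠ ε in l, 0 < g ε ∧ g ε < 1/2 := by
      filter_upwards [hevI, htend0 (Iio_mem_nhds (by norm_num : (0:ℝ) < 1/2))] with ε h1 h2
      exact ⟨hgpos ε ⟨h1.1, h1.2.1.le⟩, h2⟩
    have hFd_nonneg : ∀ᶠ ε in l, 0 ≤ Ffun (fun x y : M => dist x y) f ε := by
      filter_upwards [self_mem_nhdsWithin] with ε hε
      exact div_nonneg (limsup_log_div_nonneg (one_le_spanCount_dist hε)) (abs_nonneg _)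
    have hexgd : ∀ ε : ℝ, 0 < ε → ∀ n : ℕ,
        1 ≤ spanCount (fun x y : M => g (dist x y)) f n ε := by
      intro ε hε n
      have hev2 : ∀ᶠ x in l, g x < ε := htend0 (Iio_mem_nhds hε)
      obtain ⟨εs, hεs, hεslt⟩ := (hevI.and hev2).exists
      obtain ⟨N, hN, hNs⟩ := exists_spanning_pow f hεs.1
      obtain ⟨E, _, hE⟩ := hNs n
      exact one_le_spanCount ⟨E, span_transfer hdiam hmono hεs.1 hεs.2.1.le hεslt hE⟩
    have hFg_nonneg : ∀ᶠ ε in l, 0 ≤ Ffun (fun x y : M => g (dist x y)) f ε := by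
      filter_upwards [self_mem_nhdsWithin] with ε hε
      exact div_nonneg (limsup_log_div_nonneg (hexgd ε hε)) (abs_nonneg _)
    -- log tends to -infinity
    have hlogtop : Tendsto (fun ε : ℝ => -Real.log ε) l atTop := by
      rw [hldef]
      exact tendsto_neg_atBot_atTop.comp Real.tendsto_log_nhdsGT_zero
    by_cases hbdd : BddAbove {a : ℝ | ∀ᶠ ε in l, a ≤ Ffun (fun x y : M => dist x y) f ε}
    · -- bounded case : main argument
      have hcb : IsCoboundedUnder (· ≥ ·) l (Ffun (fun x y : M => dist x y) f) := by
        obtain ⟨b, hb⟩ := hbdd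
        exact ⟨b, fun a ha => hb (by exact eventually_map.mp ha)⟩
      have hLd0 : 0 ≤ liminf (Ffun (fun x y : M => dist x y) f) l :=
        le_liminf_of_le hcb hFd_nonneg
      by_cases hLg : liminf (Ffun (fun x y : M => g (dist x y)) f) l ≤ 0
      · have : km g * liminf (Ffun (fun x y : M => g (dist x y)) f) l ≤ 0 :=
          mul_nonpos_iff.mpr (Or.inl ⟨hk.le, hLg⟩)
        linarith
      · push_neg at hLg
        apply le_of_forall_lt
        intro c hc
        have hcKLg : c < liminf (Ffun (fun x y : M => g (dist x y)) f) l * km g := by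
          rw [mul_comm] at hc
          exact hc
        obtain ⟨c2, hc2l, hc2r⟩ := exists_between
          (show max (c / km g) 0 < liminf (Ffun (fun x y : M => g (dist x y)) f) l from
            max_lt ((div_lt_iff₀ hk).mpr hcKLg) hLg)
        have hc2pos : 0 < c2 := lt_of_le_of_lt (le_max_right _ _) hc2l
        have hcKc2 : c < c2 * km g :=
          (div_lt_iff₀ hk).mp (lt_of_le_of_lt (le_max_left _ _) hc2l)
        obtain ⟨c1, hc1l, hc1r⟩ := exists_between
          (show max (c / c2) 0 < km g from
            max_lt ((div_lt_iff₀ hc2pos).mpr (by rw [mul_comm]; exact hcKc2)) hk)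
        have hc1pos : 0 < c1 := lt_of_le_of_lt (le_max_right _ _) hc1l
        have hcc : c < c1 * c2 := by
          have h7 := (div_lt_iff₀ hc2pos).mp (lt_of_le_of_lt (le_max_left _ _) hc1l)
          exact h7
        obtain ⟨c1p, hc1pl, hc1pr⟩ := exists_between hc1r
        have hkmbdd : IsBoundedUnder (· ≥ ·) l (fun ε => Real.log (g ε) / Real.log ε) := by
          refine ⟨0, eventually_map.mpr ?_⟩
          filter_upwards [hevI, hevg] with ε h1 h2
          have hl1 : Real.log ε ≤ 0 := Real.log_nonpos h1.1.le h1.2.2.le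
          have hl2 : Real.log (g ε) ≤ 0 := Real.log_nonpos h2.1.le (by linarith [h2.2])
          exact div_nonneg_iff.mpr (Or.inr ⟨hl2, hl1⟩)
        have e3 : ∀ᶠ ε in l, c1p < Real.log (g ε) / Real.log ε :=
          eventually_lt_of_lt_liminf (hkm ▸ hc1pr) hkmbdd
        have hFgbdd : IsBoundedUnder (· ≥ ·) l (Ffun (fun x y : M => g (dist x y)) f) :=
          ⟨0, eventually_map.mpr hFg_nonneg⟩
        have e4' : ∀ᶠ ε' in l, c2 < Ffun (fun x y : M => g (dist x y)) f ε' :=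
          eventually_lt_of_lt_liminf hc2r hFgbdd
        have hφ : Tendsto (fun ε => 2 * g ε) l l := by
          rw [hldef, tendsto_nhdsWithin_iff]
          constructor
          · have h := htend0.const_mul (2:ℝ)
            rw [mul_zero] at h
            exact h
          · filter_upwards [hevI, hevg] with ε h1 h2
            exact mul_pos two_pos h2.1
        have e4 : ∀ᶠ ε in l, c2 < Ffun (fun x y : M => g (dist x y)) f (2 * g ε) :=
          hφ.eventually e4'
        have e5 : ∀ᶠ ε in l, Real.log 2 < (c1p - c1) * (-Real.log ε) := by
          have hd : (0:ℝ) < c1p - c1 := by linarith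
          filter_upwards [hlogtop.eventually_ge_atTop ((Real.log 2 + 1) / (c1p - c1))]
            with ε hε
          have h6 := (div_le_iff₀ hd).mp hε
          nlinarith
        have hev_main : ∀ᶠ ε in l, c1 * c2 ≤ Ffun (fun x y : M => dist x y) f ε := by
          filter_upwards [hevI, hevg, e3, e4, e5] with ε h1 h2 h3 h4 h5
          obtain ⟨hε, hερ, hε1⟩ := h1
          obtain ⟨hg1, hg2⟩ := h2
          have hlogε : Real.log ε < 0 := Real.log_neg hε hε1
          have hLpos : 0 < -Real.log ε := by linarith
          have hlogG : Real.log (g ε) < 0 := Real.log_neg hg1 (by linarith)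
          have h3' : Real.log (g ε) < c1p * Real.log ε := (lt_div_iff_of_neg hlogε).mp h3
          have hA1 : c1p * (-Real.log ε) < -Real.log (g ε) := by nlinarith
          have hlog2G : Real.log (2 * g ε) = Real.log 2 + Real.log (g ε) :=
            Real.log_mul two_ne_zero (ne_of_gt hg1)
          have h2Glt : Real.log (2 * g ε) < 0 := by
            rw [hlog2G]
            nlinarith
          have habs2G : |Real.log (2 * g ε)| = -Real.log (g ε) - Real.log 2 := by
            rw [abs_of_neg h2Glt, hlog2G]
            ring
          have hkey : Sfun (fun x y : M => g (dist x y)) f (2 * g ε)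
              ≤ Sfun (fun x y : M => dist x y) f ε :=
            S_gd_le_S_dist hdiam hmono hε hερ.le (by linarith)
          have habspos : 0 < |Real.log (2 * g ε)| := abs_pos.mpr (ne_of_lt h2Glt)
          have h4' : c2 * |Real.log (2 * g ε)|
              < Sfun (fun x y : M => g (dist x y)) f (2 * g ε) := by
            have := (lt_div_iff₀ habspos).mp h4
            linarith
          show c1 * c2 ≤ Sfun (fun x y : M => dist x y) f ε / |Real.log ε|
          rw [abs_of_neg hlogε]
          rw [le_div_iff₀ hLpos]
          nlinarith
        have hfin : c1 * c2 ≤ liminf (Ffun (fun x y : M => dist x y) f) l :=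
          le_liminf_of_le hcb hev_main
        exact lt_of_lt_of_le hcc hfin
    · -- unbounded case: both liminfs are junk 0
      have hLd : liminf (Ffun (fun x y : M => dist x y) f) l = 0 := by
        rw [liminf_eq]
        exact Real.sSup_of_not_bddAbove hbdd
      have htop : Tendsto (Ffun (fun x y : M => dist x y) f) l atTop := by
        rw [tendsto_atTop]
        intro b
        obtain ⟨a, ha, hba⟩ := not_bddAbove_iff.mp hbdd b
        have ha' : ∀ᶠ ε in l, a ≤ Ffun (fun x y : M => dist x y) f ε := ha
        exact ha'.mono fun ε h => le_trans hba.le h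
      have hm : 0 < g (ρ/2) := hgpos (ρ/2) ⟨half_pos hρ, half_le_self hρ0⟩
      have hc0 : 0 < g (ρ/2) / ρ := div_pos hm hρ
      set c0 : ℝ := g (ρ/2) / ρ with hc0def
      have hlin : ∀ x ∈ Set.Ioc (0:ℝ) ρ, c0 * x ≤ g x := fun x hx =>
        g_linear hρ hmono hsub hnonneg hg00 x hx
      have hgρ : 0 < g ρ := hgpos ρ ⟨hρ, le_rfl⟩
      set P : ℝ → Prop := fun t => ∃ ε, (ε ∈ Set.Ioc 0 ρ) ∧ g ε = t with hPdef
      have hevP : ∀ᶠ t in l, P t := by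
        filter_upwards [self_mem_nhdsWithin,
          mem_nhdsWithin_of_mem_nhds (Iio_mem_nhds hgρ)] with t ht1 ht2
        have hsub2 : Set.Icc (g 0) (g ρ) ⊆ g '' Set.Icc 0 ρ := intermediate_value_Icc hρ0 hcont
        rw [hg00] at hsub2
        obtain ⟨ε, hεI, hgε⟩ := hsub2 ⟨le_of_lt ht1, le_of_lt ht2⟩
        refine ⟨ε, ⟨lt_of_le_of_ne hεI.1 ?_, hεI.2⟩, hgε⟩
        intro h0
        rw [← h0, hg00] at hgε
        exact absurd hgε.symm (ne_of_gt ht1)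
      set ψ : ℝ → ℝ := fun t => if h : P t then h.choose else 1 with hψdef
      have hψ : ∀ᶠ t in l, (ψ t ∈ Set.Ioc 0 ρ) ∧ g (ψ t) = t := by
        filter_upwards [hevP] with t ht
        rw [hψdef]
        simp only [dif_pos ht]
        exact ht.choose_spec
      have hψle : ∀ᶠ t in l, ψ t ≤ t / c0 := by
        filter_upwards [hψ] with t ht
        have h1 := hlin (ψ t) ht.1
        rw [ht.2] at h1
        rw [le_div_iff₀ hc0]
        linarith
      have hψtend : Tendsto ψ l l := by
        rw [hldef, tendsto_nhdsWithin_iff]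
        constructor
        · have h1 : Tendsto (fun t : ℝ => t) l (𝓝 0) :=
            tendsto_id.mono_right nhdsWithin_le_nhds
          have h2 : Tendsto (fun t : ℝ => t / c0) l (𝓝 0) := by
            simpa using h1.div_const c0
          refine tendsto_of_tendsto_of_tendsto_of_le_of_le' tendsto_const_nhds h2 ?_ hψle
          filter_upwards [hψ] with t ht using ht.1.1.le
        · filter_upwards [hψ] with t ht using ht.1.1
      have hall : ∀ a : ℝ, ∀ᶠ t in l, a ≤ Ffun (fun x y : M => g (dist x y)) f t := by
        intro a
        have f2 : ∀ᶠ t in l, 2 * max a 0 ≤ Ffun (fun x y : M => dist x y) f (ψ t) :=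
          (htop.comp hψtend).eventually (eventually_ge_atTop (2 * max a 0))
        have f3 : ∀ᶠ t in l,
            Real.log (ψ t) ≤ -(max (max 0 (-Real.log c0)) 1) := by
          have hψlog : Tendsto (fun t => Real.log (ψ t)) l atBot :=
            Real.tendsto_log_nhdsGT_zero.comp (hldef ▸ hψtend)
          exact hψlog.eventually (eventually_le_atBot _)
        filter_upwards [hψ, f2, f3, self_mem_nhdsWithin,
          mem_nhdsWithin_of_mem_nhds (Iio_mem_nhds one_pos)] with t ht hf2 hf3 ht0 ht1
        obtain ⟨⟨hψ0, hψρ⟩, hgψ⟩ := ht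
        have hL1 : (1:ℝ) ≤ -Real.log (ψ t) := by
          have := le_max_right (max 0 (-Real.log c0)) 1
          linarith
        have hLC : max 0 (-Real.log c0) ≤ -Real.log (ψ t) := by
          have := le_max_left (max 0 (-Real.log c0)) 1
          linarith
        have hLpos : (0:ℝ) < -Real.log (ψ t) := by linarith
        have ht0' : (0:ℝ) < t := ht0
        have ht1' : t < 1 := ht1
        have hlogt : Real.log t < 0 := Real.log_neg ht0' ht1'
        have hbound : Real.log c0 + Real.log (ψ t) ≤ Real.log t := by
          have h1 : c0 * ψ t ≤ g (ψ t) := hlin _ ⟨hψ0, hψρ⟩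
          rw [hgψ] at h1
          have h2 : Real.log (c0 * ψ t) ≤ Real.log t :=
            Real.log_le_log (by positivity) h1
          rwa [Real.log_mul (ne_of_gt hc0) (ne_of_gt hψ0)] at h2
        have habs : |Real.log t| ≤ -Real.log (ψ t) + max 0 (-Real.log c0) := by
          rw [abs_of_neg hlogt]
          have h3 : -Real.log c0 ≤ max 0 (-Real.log c0) := le_max_right _ _
          linarith
        have hεsex : ∃ εs, (0 < εs ∧ εs ≤ ρ) ∧ g εs < t := by
          have hev2 : ∀ᶠ x in l, g x < t := htend0 (Iio_mem_nhds ht0')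
          obtain ⟨εs, h1, h2⟩ := (hevI.and hev2).exists
          exact ⟨εs, ⟨h1.1, h1.2.1.le⟩, h2⟩
        obtain ⟨εs, ⟨hεs1, hεs2⟩, hεs3⟩ := hεsex
        have hkey : Sfun (fun x y : M => dist x y) f (ψ t)
            ≤ Sfun (fun x y : M => g (dist x y)) f t := by
          have h : Sfun (fun x y : M => dist x y) f (ψ t)
              ≤ Sfun (fun x y : M => g (dist x y)) f (g (ψ t)) :=
            S_dist_le_S_gd hdiam hmono hψ0 hψρ hεs1 hεs2 (by rw [hgψ]; exact hεs3)
          rwa [hgψ] at h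
        have hSd0 : 0 ≤ Sfun (fun x y : M => dist x y) f (ψ t) :=
          limsup_log_div_nonneg (one_le_spanCount_dist hψ0)
        have habs0 : 0 < |Real.log t| := abs_pos.mpr (ne_of_lt hlogt)
        have hstep1 : Sfun (fun x y : M => dist x y) f (ψ t) / |Real.log t|
            ≤ Ffun (fun x y : M => g (dist x y)) f t :=
          div_le_div_of_nonneg_right hkey (abs_nonneg _)
        have hstep2 : Sfun (fun x y : M => dist x y) f (ψ t)
              / (-Real.log (ψ t) + max 0 (-Real.log c0))
            ≤ Sfun (fun x y : M => dist x y) f (ψ t) / |Real.log t| :=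
          div_le_div_of_nonneg_left hSd0 habs0 habs
        have hstep3 : Ffun (fun x y : M => dist x y) f (ψ t) / 2
            ≤ Sfun (fun x y : M => dist x y) f (ψ t)
              / (-Real.log (ψ t) + max 0 (-Real.log c0)) := by
          have habsψ : |Real.log (ψ t)| = -Real.log (ψ t) := abs_of_neg (by linarith)
          show Sfun (fun x y : M => dist x y) f (ψ t) / |Real.log (ψ t)| / 2 ≤ _
          rw [habsψ, div_div]
          apply div_le_div_of_nonneg_left hSd0
            (by linarith : (0:ℝ) < -Real.log (ψ t) + max 0 (-Real.log c0))
          have h4 : max 0 (-Real.log c0) ≤ -Real.log (ψ t) := hLC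
          linarith
        have hhalf : max a 0 ≤ Ffun (fun x y : M => dist x y) f (ψ t) / 2 := by
          linarith
        calc a ≤ max a 0 := le_max_left _ _
          _ ≤ Ffun (fun x y : M => g (dist x y)) f t := by linarith
      have hgb : ¬ BddAbove
          {a : ℝ | ∀ᶠ ε in l, a ≤ Ffun (fun x y : M => g (dist x y)) f ε} := by
        rintro ⟨b, hb⟩
        have h1 : b + 1 ≤ b := hb (hall (b+1))
        linarith
      have hLg : liminf (Ffun (fun x y : M => g (dist x y)) f) l = 0 := by
        rw [liminf_eq]
        exact Real.sSup_of_not_bddAbove hgb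
      rw [hLd, hLg, mul_zero]
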